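/- arXiv:2305.12688 — 7 statements merged into one kernel-verified Lean document; each statement's English description precedes it below -/
import Mathlib

section
/- Let V be a finite vertex set and X : V → V → L a labeling that recognizes vertices. Then (a) the diamond product D(X) recognizes vertices, i.e. D(X)(i,i) ≠ D(X)(u,v) for all i, u, v ∈ V with u ≠ v; and (b) D(X) refines X, i.e. D(X)(u,v) = D(X)(r,s) implies X(u,v) = X(r,s) for all u, v, r, s ∈ V. -/
/-! Both parts come from reading off a single element of the diamond product. A pair
`(X i i, l)` can occur in `D(X)(r,s)` only through a walk `r → k → s` with `X r k = X i i`,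
which forces `k = r` and hence `l = X r s`. The pair `(X i i, X i i)` lies in `D(X)(i,i)`,
and `(X u u, X u v)` lies in `D(X)(u,v)`. -/

namespace Binding

/-- The diamond product of a labeling: the multiset of 2-d-walk label pairs. -/
def diamond {V L : Type*} [Fintype V] (X : V → V → L) : V → V → Multiset (L × L) :=
  fun u v => Finset.univ.val.map fun k => (X u k, X k v)

/-- A labeling recognizes vertices if diagonal labels never coincide with
off-diagonal labels. -/
def RecognizesVertices {V L : Type*} (X : V → V → L) : Prop :=
  ∀ i u v : V, u ≠ v → X i i ≠ X u v

/-- `Y` refines `X` if equal `Y`-labels imply equal `X`-labels. -/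
def Refines {V L L' : Type*} (Y : V → V → L') (X : V → V → L) : Prop :=
  ∀ u v r s : V, Y u v = Y r s → X u v = X r s

/-- A labeling is stable if labels agree exactly when their diamond products agree. -/
def Stable {V L : Type*} [Fintype V] (X : V → V → L) : Prop :=
  ∀ u v r s : V, X u v = X r s ↔ diamond X u v = diamond X r s

theorem RecognizesVertices.eq_of_eq_diag {V L : Type*} {X : V → V → L}
    (hX : RecognizesVertices X) {i u v : V} (h : X u v = X i i) : u = v := by
  by_contra huv
  exact hX i u v huv h.symm

section Diamond

variable {V L : Type*} [Fintype V] {X : V → V → L}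

theorem mem_diamond {u v : V} {p : L × L} :
    p ∈ diamond X u v ↔ ∃ k, (X u k, X k v) = p := by
  simp [diamond]

theorem mk_mem_diamond (X : V → V → L) (u k v : V) : (X u k, X k v) ∈ diamond X u v :=
  mem_diamond.2 ⟨k, rfl⟩

theorem RecognizesVertices.eq_of_diag_mem_diamond (hX : RecognizesVertices X) {i r s : V}
    {l : L} (h : (X i i, l) ∈ diamond X r s) : X r s = l := by
  obtain ⟨k, hk⟩ := mem_diamond.1 h
  obtain ⟨hrk, hks⟩ := Prod.mk.inj hk
  rw [← hks, hX.eq_of_eq_diag hrk]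

end Diamond

/-- if `X` recognizes vertices, then (a) its diamond product
recognizes vertices, and (b) the diamond product refines `X`. -/
theorem diamond_recognizesVertices_and_refines
    {V L : Type*} [Fintype V] (X : V → V → L)
    (hX : RecognizesVertices X) :
    RecognizesVertices (diamond X) ∧ Refines (diamond X) X := by
  constructor
  · intro i u v huv hdiag
    have hmem : (X i i, X i i) ∈ diamond X u v := hdiag ▸ mk_mem_diamond X i i i
    exact huv (hX.eq_of_eq_diag (hX.eq_of_diag_mem_diamond hmem))
  · intro u v r s heq
    have hmem : (X u u, X u v) ∈ diamond X r s := heq ▸ mk_mem_diamond X u u v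
    exact (hX.eq_of_diag_mem_diamond hmem).symm

end Binding
end

section
/- Let V be a finite vertex set and X : V → V → L a labeling that recognizes vertices. A permutation σ of V satisfies X(u,v) = X(σ(u), σ(v)) for all u, v ∈ V if and only if it satisfies D(X)(u,v) = D(X)(σ(u), σ(v)) for all u, v ∈ V; that is, X and its diamond product D(X) have the same automorphisms. -/
namespace Binding

theorem diamond_comp_equiv {V W L : Type*} [Fintype V] [Fintype W] (Y : W → W → L) (e : V ≃ W)
    (u v : V) : diamond (fun a b => Y (e a) (e b)) u v = diamond Y (e u) (e v) := by
  rw [diamond, diamond, ← Multiset.map_univ_val_equiv e, Multiset.map_map]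
  rfl

theorem mem_diamond_iff {V L : Type*} [Fintype V] {X : V → V → L} {u v : V} {p : L × L} :
    p ∈ diamond X u v ↔ ∃ k, (X u k, X k v) = p := by
  simp [diamond]

/-- `(X u u, X u v)` lies in `diamond X u v`, and in `diamond X r s` only the walk through `k = r`
can carry the diagonal label `X u u` in its first entry. -/
theorem RecognizesVertices.diamond_refines {V L : Type*} [Fintype V] {X : V → V → L}
    (hX : RecognizesVertices X) : Refines (diamond X) X := by
  intro u v r s h
  obtain ⟨k, hk⟩ : ∃ k, (X r k, X k s) = (X u u, X u v) :=
    mem_diamond_iff.1 (h ▸ mem_diamond_iff.2 ⟨u, rfl⟩)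
  obtain ⟨hrk, hks⟩ := Prod.mk.inj hk
  obtain rfl : r = k := by
    by_contra hne
    exact hX u r k hne hrk.symm
  exact hks.symm

/-- a vertex-recognizing labeling and its diamond product have the
same automorphisms. -/
theorem diamond_automorphisms
    {V L : Type*} [Fintype V] (X : V → V → L)
    (hX : RecognizesVertices X) (σ : Equiv.Perm V) :
    (∀ u v : V, X u v = X (σ u) (σ v)) ↔
      (∀ u v : V, diamond X u v = diamond X (σ u) (σ v)) := by
  constructor
  · intro hσ u v
    have hXσ : X = fun a b => X (σ a) (σ b) := funext₂ hσ
    rw [← diamond_comp_equiv X σ, ← hXσ]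
  · exact fun hσ u v => hX.diamond_refines u v (σ u) (σ v) (hσ u v)

end Binding
end

section
/- Let X : V → V → L be a stable labeling of a finite vertex set V that recognizes vertices. For all u, v ∈ V, X(u,u) = X(v,v) if and only if both the multisets {X(u,k) : k ∈ V} and {X(v,k) : k ∈ V} are equal and the multisets {X(k,u) : k ∈ V} and {X(k,v) : k ∈ V} are equal. -/
namespace Binding

/-! In a stable labeling the diamond product of `(u, v)` determines the label of `(u, v)`, and its
two marginals are the row of `u` and the column of `v`; so equal diagonal labels force equal rows
and columns. Conversely, if `u` and `v` have the same row, the label `X u u` occurs in the row of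
`v`, and since diagonal labels are never off-diagonal labels it must occur there at `(v, v)`. -/

section

variable {V L : Type*}

theorem map_fst_diamond [Fintype V] (X : V → V → L) (u v : V) :
    (diamond X u v).map Prod.fst = Finset.univ.val.map (fun k => X u k) := by
  simp only [diamond, Multiset.map_map, Function.comp_def]

theorem map_snd_diamond [Fintype V] (X : V → V → L) (u v : V) :
    (diamond X u v).map Prod.snd = Finset.univ.val.map (fun k => X k v) := by
  simp only [diamond, Multiset.map_map, Function.comp_def]

namespace Stable

variable [Fintype V] {X : V → V → L}

theorem row_eq (hX : Stable X) {u v r s : V} (h : X u v = X r s) :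
    Finset.univ.val.map (fun k => X u k) = Finset.univ.val.map (fun k => X r k) := by
  rw [← map_fst_diamond X u v, ← map_fst_diamond X r s, (hX u v r s).mp h]

theorem col_eq (hX : Stable X) {u v r s : V} (h : X u v = X r s) :
    Finset.univ.val.map (fun k => X k v) = Finset.univ.val.map (fun k => X k s) := by
  rw [← map_snd_diamond X u v, ← map_snd_diamond X r s, (hX u v r s).mp h]

end Stable

namespace RecognizesVertices

variable {X : V → V → L}

theorem eq_of_diag_eq (hX : RecognizesVertices X) {i u v : V} (h : X i i = X u v) :
    u = v := by
  by_contra huv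
  exact hX i u v huv h

theorem diag_eq_of_row_eq [Fintype V] (hX : RecognizesVertices X) {u v : V}
    (hrow : Finset.univ.val.map (fun k => X u k) = Finset.univ.val.map (fun k => X v k)) :
    X u u = X v v := by
  have hmem : X u u ∈ Finset.univ.val.map (fun k => X v k) :=
    hrow ▸ Multiset.mem_map_of_mem _ (Finset.mem_univ_val u)
  obtain ⟨k, -, hk⟩ := Multiset.mem_map.mp hmem
  obtain rfl := hX.eq_of_diag_eq hk.symm
  exact hk.symm

end RecognizesVertices

end

/-- in a stable vertex-recognizing labeling, two vertices share a
diagonal label iff their row multisets and column multisets coincide. -/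
theorem stable_diag_iff_row_col
    {V L : Type*} [Fintype V] (X : V → V → L)
    (hstab : Stable X) (hrec : RecognizesVertices X)
    (u v : V) :
    X u u = X v v ↔
      (Finset.univ.val.map (fun k => X u k) = Finset.univ.val.map (fun k => X v k) ∧
       Finset.univ.val.map (fun k => X k u) = Finset.univ.val.map (fun k => X k v)) :=
  ⟨fun h => ⟨hstab.row_eq h, hstab.col_eq h⟩, fun h => hrec.diag_eq_of_row_eq h.1⟩

end Binding
end

section
/- Let H be a finite simple graph and M a stable vertex-recognizing refinement of H. Then any two vertices with the same diagonal label have the same degree in H: for all u, v, if M(u,u) = M(v,v) then deg_H(u) = deg_H(v). -/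
/-!
The degree of `w` can be read off the diamond product at `(w, w)`: `w k` is an edge exactly when
the first entry `M w k` of the pair indexed by `k` is the label of some edge, because vertex
recognition keeps the diagonal label `M w w` away from all edge labels and the refinement property
makes adjacency a function of off-diagonal labels. Stability turns `M u u = M v v` into equality of
the diamond products at `(u, u)` and `(v, v)`, hence of the degrees.
-/

namespace Binding

/-- A labeling is a stable vertex-recognizing refinement of a simple graph if it
is stable, recognizes vertices, and equal off-diagonal labels agree on
adjacency. -/
def IsSVRRefinement {W L : Type*} [Fintype W] (H : SimpleGraph W) (M : W → W → L) : Prop :=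
  Stable M ∧ RecognizesVertices M ∧
    ∀ u v r s : W, u ≠ v → r ≠ s → M u v = M r s → (H.Adj u v ↔ H.Adj r s)

theorem countP_diamond {V L : Type*} [Fintype V] (X : V → V → L) (p : L × L → Prop)
    [DecidablePred p] (u v : V) :
    (diamond X u v).countP p = (Finset.univ.filter fun k => p (X u k, X k v)).card := by
  simp only [diamond, Multiset.countP_map, Finset.card, Finset.filter_val]

def IsEdgeLabel {V L : Type*} (H : SimpleGraph V) (M : V → V → L) (a : L) : Prop :=
  ∃ r s : V, H.Adj r s ∧ M r s = a

theorem isEdgeLabel_iff_adj {V L : Type*} [Fintype V] {H : SimpleGraph V} {M : V → V → L}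
    (hM : IsSVRRefinement H M) (w k : V) : IsEdgeLabel H M (M w k) ↔ H.Adj w k := by
  obtain ⟨-, hrec, hadj⟩ := hM
  constructor
  · rintro ⟨r, s, hrs, hlabel⟩
    have hwk : w ≠ k := by
      rintro rfl
      exact hrec w r s hrs.ne hlabel.symm
    exact (hadj w k r s hwk hrs.ne hlabel.symm).mpr hrs
  · exact fun hwk => ⟨w, k, hwk, rfl⟩

theorem degree_eq_countP_diamond {V L : Type*} [Fintype V] {H : SimpleGraph V}
    [DecidableRel H.Adj] {M : V → V → L} [DecidablePred (IsEdgeLabel H M)]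
    (hM : IsSVRRefinement H M) (w : V) :
    H.degree w = (diamond M w w).countP fun a => IsEdgeLabel H M a.1 := by
  rw [countP_diamond, ← SimpleGraph.card_neighborFinset_eq_degree,
    SimpleGraph.neighborFinset_eq_filter]
  simp only [isEdgeLabel_iff_adj hM]

/-- vertices with the same diagonal label in a stable
vertex-recognizing refinement of `H` have the same degree in `H`. -/
theorem same_cell_same_degree
    {V L : Type*} [Fintype V] (H : SimpleGraph V) [DecidableRel H.Adj]
    (M : V → V → L) (hM : IsSVRRefinement H M)
    (u v : V) (h : M u u = M v v) :
    H.degree u = H.degree v := by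
  classical
  rw [degree_eq_countP_diamond hM u, degree_eq_countP_diamond hM v, (hM.1 u u v v).mp h]

end Binding
end

section
/- (Composition Theorem) Let X : V → V → L be a stable labeling of a finite vertex set V that recognizes vertices, and let S ⊆ V be a union of cells of X, i.e. whenever a ∈ S and X(b,b) = X(a,a) then b ∈ S. Then the restriction of X to S × S is a stable labeling of the vertex set S. -/
/-!
In a stable labeling that recognizes vertices, a label `X u k` determines the diagonal label
`X k k`, hence whether `k` lies in the union of cells `S`. So the diamond of the restriction at
`(u, v)` is the diamond of `X` filtered by a test on the first label alone, and equal diamonds stay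
equal. Conversely, equal diamonds force equal labels whenever vertices are recognized: the pair
`(X u u, X u v)` must be matched by some `(X r j, X j s)`, and recognition forces `j = r`.
-/

namespace Binding

section Restriction

variable {V W L : Type*}

namespace RecognizesVertices

theorem comp_injective {X : V → V → L} (hrec : RecognizesVertices X) {f : W → V}
    (hf : Function.Injective f) : RecognizesVertices (fun a b => X (f a) (f b)) :=
  fun i u v huv => hrec (f i) (f u) (f v) (hf.ne huv)

theorem eq_of_diamond_eq [Fintype V] {X : V → V → L} (hrec : RecognizesVertices X)
    {u v r s : V} (h : diamond X u v = diamond X r s) : X u v = X r s := by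
  have hmem : (X u u, X u v) ∈ diamond X r s :=
    h ▸ Multiset.mem_map.2 ⟨u, Finset.mem_univ _, rfl⟩
  obtain ⟨j, -, hrj, hjs⟩ := by simpa only [diamond, Multiset.mem_map, Prod.mk.injEq] using hmem
  obtain rfl : r = j := by_contra fun hne => hrec u r j hne hrj.symm
  exact hjs.symm

end RecognizesVertices

theorem Stable.diag_eq_of_eq [Fintype V] {X : V → V → L} (hstab : Stable X)
    (hrec : RecognizesVertices X) {u k r j : V} (h : X u k = X r j) : X k k = X j j := by
  have hmem : (X u k, X k k) ∈ diamond X r j :=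
    (hstab u k r j).1 h ▸ Multiset.mem_map.2 ⟨k, Finset.mem_univ _, rfl⟩
  obtain ⟨m, -, -, hmj⟩ := by simpa only [diamond, Multiset.mem_map, Prod.mk.injEq] using hmem
  obtain rfl : m = j := by_contra fun hne => hrec k m j hne hmj.symm
  exact hmj.symm

theorem diamond_subtype_eq_filter [Fintype V] (X : V → V → L) (S : Finset V) (P : L → Prop)
    [DecidablePred P] (hP : ∀ a k, P (X a k) ↔ k ∈ S) (a b : {x // x ∈ S}) :
    diamond (fun x y : {x // x ∈ S} => X x.val y.val) a b
      = (diamond X a.val b.val).filter (fun p => P p.1) := by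
  classical
  have hfilter : Finset.univ.val.filter (fun k => P (X a.val k)) = S.val := by
    rw [Multiset.filter_congr fun k _ => hP a.val k]
    exact congrArg Finset.val (Finset.filter_mem_eq_inter.trans (Finset.univ_inter S))
  calc diamond (fun x y : {x // x ∈ S} => X x.val y.val) a b
      = S.val.map fun k => (X a.val k, X k b.val) := by
        rw [diamond, Finset.univ_eq_attach, Finset.attach_val]
        exact Multiset.attach_map_val' S.val fun k => (X a.val k, X k b.val)
    _ = (Finset.univ.val.filter fun k => P (X a.val k)).map fun k => (X a.val k, X k b.val) := by
        rw [hfilter]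
    _ = (diamond X a.val b.val).filter (fun p => P p.1) := by
        rw [diamond, Multiset.filter_map]
        rfl

end Restriction

/-- Composition Theorem: the restriction of a stable
vertex-recognizing labeling to a union of cells is stable. -/
theorem composition
    {V L : Type*} [Fintype V] (X : V → V → L)
    (hstab : Stable X) (hrec : RecognizesVertices X)
    (S : Finset V) (hS : ∀ a ∈ S, ∀ b : V, X b b = X a a → b ∈ S) :
    Stable (fun a b : {x // x ∈ S} => X a.val b.val) := by
  classical
  let PointsIntoS : L → Prop := fun ℓ => ∃ a, ∃ k ∈ S, X a k = ℓ
  have hP : ∀ a k, PointsIntoS (X a k) ↔ k ∈ S := fun a k =>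
    ⟨fun ⟨_, j, hj, hjk⟩ => hS j hj k (hstab.diag_eq_of_eq hrec hjk.symm),
      fun hk => ⟨a, k, hk, rfl⟩⟩
  intro u v r s
  refine ⟨fun h => ?_, (hrec.comp_injective Subtype.val_injective).eq_of_diamond_eq⟩
  rw [diamond_subtype_eq_filter X S PointsIntoS hP, diamond_subtype_eq_filter X S PointsIntoS hP,
    (hstab _ _ _ _).1 h]

end Binding
end

section
/- Every vertex-recognizing labeling of a finite vertex set has a coarsest stable refinement: for every finite vertex set V and every labeling X : V → V → L recognizing vertices, there exists a labeling W : V → V → ℕ that is stable, recognizes vertices, refines X, and is such that every stable labeling (into any type) refining X also refines W. -/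
/-!
Iterate the Weisfeiler–Leman step `X ↦ (X, diamond X)`. Each step refines the previous one, and
every stable refinement `Z` of `X` refines every iterate, because equal diamond products of a
labeling force equal diamond products of every labeling it refines. The kernels of the iterates
live in the finite lattice of relations on `V × V`, so two of them coincide and the decreasing
sequence is constant in between: some iterate `Y` refines its own successor, i.e. equal labels
have equal diamond products. For a vertex-recognizing `Y` the converse is automatic (the walk
through the diagonal pins down the label), so `Y` is stable. Finally, `Y` has finitely many
labels, which are renamed injectively into `ℕ`.
-/

namespace Binding

open Function

section Refinement

variable {V L L' L'' : Type*}

theorem Refines.refl (X : V → V → L) : Refines X X :=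
  fun _ _ _ _ h => h

theorem Refines.trans {Z : V → V → L''} {Y : V → V → L'} {X : V → V → L}
    (hZY : Refines Z Y) (hYX : Refines Y X) : Refines Z X :=
  fun u v r s h => hYX u v r s (hZY u v r s h)

theorem RecognizesVertices.of_refines {Y : V → V → L'} {X : V → V → L}
    (hX : RecognizesVertices X) (hYX : Refines Y X) : RecognizesVertices Y :=
  fun i u v huv h => hX i u v huv (hYX i i u v h)

theorem Refines.exists_comp [Nonempty V] {Z : V → V → L'} {Y : V → V → L} (h : Refines Z Y) :
    ∃ f : L' → L, ∀ u v, Y u v = f (Z u v) := by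
  obtain ⟨w⟩ := ‹Nonempty V›
  have hfac : FactorsThrough (uncurry Y) (uncurry Z) := fun a b hab => h a.1 a.2 b.1 b.2 hab
  exact ⟨extend (uncurry Z) (uncurry Y) fun _ => Y w w,
    fun u v => (hfac.extend_apply _ (u, v)).symm⟩

theorem exists_nat_labeling [Finite V] (Y : V → V → L) :
    ∃ W : V → V → ℕ, Refines W Y ∧ Refines Y W := by
  obtain ⟨f, hf⟩ := Countable.exists_injective_nat (Set.range (uncurry Y))
  refine ⟨fun u v => f ⟨Y u v, (u, v), rfl⟩, fun u v r s h => ?_, fun u v r s h => ?_⟩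
  · exact congrArg Subtype.val (hf h)
  · simp only [h]

end Refinement

section Diamond

variable {V L L' : Type*} [Fintype V]

theorem diamond_comp (Z : V → V → L') (f : L' → L) (u v : V) :
    diamond (fun a b => f (Z a b)) u v = (diamond Z u v).map (Prod.map f f) := by
  simp only [diamond, Multiset.map_map]
  rfl

theorem Refines.diamond_eq {Z : V → V → L'} {Y : V → V → L} (h : Refines Z Y) {u v r s : V}
    (hd : diamond Z u v = diamond Z r s) : diamond Y u v = diamond Y r s := by
  have : Nonempty V := ⟨u⟩
  obtain ⟨f, hf⟩ := h.exists_comp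
  obtain rfl : Y = fun a b => f (Z a b) := funext₂ hf
  rw [diamond_comp, diamond_comp, hd]

/-- The pair `(Y u u, Y u v)` lies in `diamond Y u v`, and a vertex-recognizing `Y` lets it
occur in `diamond Y r s` only through the walk `r, r, s`. -/
theorem RecognizesVertices.eq_of_diamond_eq_s9 {Y : V → V → L} (hY : RecognizesVertices Y)
    {u v r s : V} (hd : diamond Y u v = diamond Y r s) : Y u v = Y r s := by
  have hmem : (Y u u, Y u v) ∈ diamond Y r s :=
    hd ▸ Multiset.mem_map.mpr ⟨u, Finset.mem_univ_val u, rfl⟩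
  obtain ⟨k, -, hk⟩ := Multiset.mem_map.mp hmem
  obtain ⟨hrk, hks⟩ := Prod.ext_iff.mp hk
  obtain rfl : r = k := by_contra fun hne => hY u r k hne hrk.symm
  exact hks.symm

theorem Stable.of_refines_of_refines {Y : V → V → L} {W : V → V → L'} (hY : Stable Y)
    (hWY : Refines W Y) (hYW : Refines Y W) : Stable W := fun u v r s =>
  ⟨fun h => hYW.diamond_eq ((hY u v r s).mp (hWY u v r s h)),
    fun h => hYW u v r s ((hY u v r s).mpr (hWY.diamond_eq h))⟩

def diamondStep (X : V → V → L) : V → V → L × Multiset (L × L) :=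
  fun u v => (X u v, diamond X u v)

theorem diamondStep_refines (X : V → V → L) : Refines (diamondStep X) X :=
  fun _ _ _ _ h => congrArg Prod.fst h

theorem Stable.refines_diamondStep {Z : V → V → L'} {X : V → V → L} (hZ : Stable Z)
    (hZX : Refines Z X) : Refines Z (diamondStep X) := fun u v r s h =>
  Prod.ext (hZX u v r s h) (hZX.diamond_eq ((hZ u v r s).mp h))

theorem Stable.of_refines_diamondStep {X : V → V → L} (hX : RecognizesVertices X)
    (h : Refines X (diamondStep X)) : Stable X := fun u v r s =>
  ⟨fun hX' => congrArg Prod.snd (h u v r s hX'), hX.eq_of_diamond_eq_s9⟩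

end Diamond

section WeisfeilerLeman

universe u

def WLType (L : Type u) : ℕ → Type u
  | 0 => L
  | n + 1 => WLType L n × Multiset (WLType L n × WLType L n)

variable {V L L' : Type*} [Fintype V]

def WL (X : V → V → L) : (n : ℕ) → V → V → WLType L n
  | 0 => X
  | n + 1 => diamondStep (WL X n)

theorem WL_refines_of_le (X : V → V → L) {m n : ℕ} (hmn : m ≤ n) :
    Refines (WL X n) (WL X m) := by
  induction n, hmn using Nat.le_induction with
  | base => exact Refines.refl _
  | succ n _ ih => exact (diamondStep_refines (WL X n)).trans ih

theorem Stable.refines_WL {Z : V → V → L'} {X : V → V → L} (hZ : Stable Z) (hZX : Refines Z X) :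
    ∀ n, Refines Z (WL X n)
  | 0 => hZX
  | n + 1 => hZ.refines_diamondStep (hZ.refines_WL hZX n)

theorem exists_WL_refines_succ (X : V → V → L) : ∃ k, Refines (WL X k) (WL X (k + 1)) := by
  let kernel (n : ℕ) : Set ((V × V) × (V × V)) :=
    {p | WL X n p.1.1 p.1.2 = WL X n p.2.1 p.2.2}
  obtain ⟨i, j, hij, hker⟩ := Finite.exists_ne_map_eq_of_infinite kernel
  have hsucc : ∀ {i j}, i < j → kernel i = kernel j → Refines (WL X i) (WL X (i + 1)) :=
    fun {i j} hlt hker u v r s h =>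
      WL_refines_of_le X hlt u v r s (show ((u, v), (r, s)) ∈ kernel j from hker ▸ h)
  rcases hij.lt_or_gt with hlt | hgt
  · exact ⟨i, hsucc hlt hker⟩
  · exact ⟨j, hsucc hgt hker.symm⟩

end WeisfeilerLeman

/-- every vertex-recognizing labeling of a finite vertex set has a
coarsest stable refinement (with labels in `ℕ`). -/
theorem exists_coarsest_stable_refinement
    {V L : Type*} [Fintype V] (X : V → V → L) (hrec : RecognizesVertices X) :
    ∃ W : V → V → ℕ, Stable W ∧ RecognizesVertices W ∧ Refines W X ∧
      ∀ (L' : Type*) (Z : V → V → L'), Stable Z → Refines Z X → Refines Z W := by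
  obtain ⟨k, hk⟩ := exists_WL_refines_succ X
  have hYX : Refines (WL X k) X := WL_refines_of_le X (Nat.zero_le k)
  have hrecY : RecognizesVertices (WL X k) := hrec.of_refines hYX
  have hY : Stable (WL X k) := .of_refines_diamondStep hrecY hk
  obtain ⟨W, hWY, hYW⟩ := exists_nat_labeling (WL X k)
  exact ⟨W, hY.of_refines_of_refines hWY hYW, hrecY.of_refines hWY, hWY.trans hYX,
    fun _ Z hZ hZX => (hZ.refines_WL hZX k).trans hYW⟩

end Binding
end

section
/- Let G be a simple graph on a finite vertex set V with |V| ≥ 4, and let [G] be its binding graph on W = V ⊕ P. Then every automorphism φ of the simple graph [G] maps basic vertices to basic vertices: for every u ∈ V there exists v ∈ V with φ(inl u) = inl v. In particular, a basic vertex never shares an orbit of Aut([G]) with a binding vertex. -/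
/-!
Automorphisms preserve the number of neighbours. A binding vertex has exactly two neighbours,
while a basic vertex `u` is adjacent to the `|V| - 1 ≥ 3` binding vertices `{u, x}`, `x ≠ u`.
-/

namespace Binding

/-- The type of unordered pairs of distinct vertices of `V`. -/
abbrev Pairs (V : Type*) : Type _ := {s : Finset V // s.card = 2}

/-- The binding graph of a simple graph `G`: each pair of distinct basic
vertices gets a fresh binding vertex adjacent exactly to the two of them. -/
def bindingGraph {V : Type*} (G : SimpleGraph V) : SimpleGraph (V ⊕ Pairs V) where
  Adj a b :=
    match a, b with
    | Sum.inl u, Sum.inl v => G.Adj u v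
    | Sum.inl u, Sum.inr p => u ∈ p.val
    | Sum.inr p, Sum.inl u => u ∈ p.val
    | Sum.inr _, Sum.inr _ => False
  symm := by
    constructor
    rintro (u | p) (v | q) h
    · exact G.adj_symm h
    · exact h
    · exact h
    · exact h
  loopless := by
    constructor
    rintro (u | p) h
    · exact G.irrefl h
    · exact h

end Binding

namespace SimpleGraph.Iso

variable {V W : Type*} {G : SimpleGraph V} {G' : SimpleGraph W}

theorem ncard_neighborSet (φ : G ≃g G') (v : V) :
    (G'.neighborSet (φ v)).ncard = (G.neighborSet v).ncard := by
  rw [← φ.image_neighborSet, Set.ncard_image_of_injective _ φ.injective]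

end SimpleGraph.Iso

namespace Binding

section

variable {V : Type*} (G : SimpleGraph V)

theorem neighborSet_inr (p : Pairs V) :
    (bindingGraph G).neighborSet (.inr p) = Sum.inl '' (p.val : Set V) := by
  ext (w | q) <;> simp [bindingGraph]

theorem ncard_neighborSet_inr (p : Pairs V) :
    ((bindingGraph G).neighborSet (.inr p)).ncard = 2 := by
  rw [neighborSet_inr, Set.ncard_image_of_injective _ Sum.inl_injective,
    Set.ncard_coe_finset, p.2]

theorem card_sub_one_le_ncard_neighborSet_inl [Fintype V] (u : V) :
    Fintype.card V - 1 ≤ ((bindingGraph G).neighborSet (.inl u)).ncard := by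
  classical
  let pairWith (x : {x // x ≠ u}) : V ⊕ Pairs V := .inr ⟨{u, (x : V)}, Finset.card_pair x.2.symm⟩
  have pairWith_injective : pairWith.Injective := by
    intro x y hxy
    have : ({u, (x : V)} : Set V) = {u, (y : V)} := by
      simpa [pairWith, ← Finset.coe_inj] using hxy
    rcases Set.pair_eq_pair_iff.1 this with ⟨-, h⟩ | ⟨h, -⟩
    · exact Subtype.ext h
    · exact absurd h.symm y.2
  have range_subset : Set.range pairWith ⊆ (bindingGraph G).neighborSet (.inl u) := by
    rintro _ ⟨x, rfl⟩
    simp [pairWith, bindingGraph]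
  calc Fintype.card V - 1
      = Nat.card {x // x ≠ u} := by simp [Nat.card_eq_fintype_card, Fintype.card_subtype_compl]
    _ = (Set.range pairWith).ncard := (Set.ncard_range_of_injective pairWith_injective).symm
    _ ≤ ((bindingGraph G).neighborSet (.inl u)).ncard := Set.ncard_le_ncard range_subset

end

theorem automorphism_maps_basic_to_basic_general
    {V : Type*} [Fintype V] (G : SimpleGraph V)
    (hcard : 4 ≤ Fintype.card V)
    (φ : bindingGraph G ≃g bindingGraph G) (u : V) :
    ∃ v : V, φ (Sum.inl u) = Sum.inl v := by
  rcases hφu : φ (Sum.inl u) with v | p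
  · exact ⟨v, rfl⟩
  · have hdeg := φ.ncard_neighborSet (Sum.inl u)
    rw [hφu, ncard_neighborSet_inr] at hdeg
    have hdeg_le := card_sub_one_le_ncard_neighborSet_inl G u
    omega

/-- every automorphism of the binding graph maps basic vertices
to basic vertices (so basic and binding vertices never share an orbit). -/
theorem automorphism_maps_basic_to_basic
    {V : Type*} [Fintype V] [DecidableEq V] (G : SimpleGraph V)
    (hcard : 4 ≤ Fintype.card V)
    (φ : bindingGraph G ≃g bindingGraph G) (u : V) :
    ∃ v : V, φ (Sum.inl u) = Sum.inl v :=
  automorphism_maps_basic_to_basic_general G hcard φ u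

end Binding
end
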